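/- arXiv:2105.10061 — 3 statements merged into one kernel-verified Lean document; each statement's English description precedes it below -/
import Mathlib

section
/- Suppose real vectors satisfy ||Q(t+1) − Q*||² ≤ ||Q(t) − Q*||² + B − 2(Z(Q*) − Z(Q(t))), and the local polyhedron property Z(Q*) − Z(Q) ≥ L·||Q* − Q|| holds for all Q with ||Q − Q*|| > D, where D ≥ max{B/L − L/4, L/2}. Then whenever ||Q(t) − Q*|| > D, we have ||Q(t+1) − Q*|| ≤ ||Q(t) − Q*|| − L/2. -/
/-! Write `r = ‖Q(t) − Q*‖`. The polyhedron property turns the drift inequality into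
`‖Q(t+1) − Q*‖² ≤ r² − 2Lr + B`, and `r ≥ B/L − L/4` says exactly that `−2Lr + B ≤ −Lr + L²/4`,
so `‖Q(t+1) − Q*‖² ≤ (r − L/2)²`; since `r ≥ L/2`, taking square roots gives the claim. -/

lemma sq_add_sub_le_sq_sub_half {r B L : ℝ} (hL : 0 < L) (hr : B / L - L / 4 ≤ r) :
    r ^ 2 + B - 2 * (L * r) ≤ (r - L / 2) ^ 2 := by
  have hB : B ≤ L * r + L ^ 2 / 4 := by
    have := (div_le_iff₀ hL).mp (by linarith : B / L ≤ r + L / 4)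
    linarith
  nlinarith

lemma le_sub_half_of_sq_le {s r B L : ℝ} (hL : 0 < L) (hs : 0 ≤ s) (hrL : L / 2 ≤ r)
    (hrB : B / L - L / 4 ≤ r) (h : s ^ 2 ≤ r ^ 2 + B - 2 * (L * r)) : s ≤ r - L / 2 :=
  (pow_le_pow_iff_left₀ hs (sub_nonneg.mpr hrL) two_ne_zero).mp
    (h.trans (sq_add_sub_le_sq_sub_half hL hrB))

theorem stmt3_general {n : ℕ} (Q0 Q1 Qs : EuclideanSpace ℝ (Fin n))
    (Z : EuclideanSpace ℝ (Fin n) → ℝ) (B L D : ℝ)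
    (hL : 0 < L)
    (hD : D ≥ max (B / L - L / 4) (L / 2))
    (hdrift : ‖Q1 - Qs‖ ^ 2 ≤ ‖Q0 - Qs‖ ^ 2 + B - 2 * (Z Qs - Z Q0))
    (hpoly : ∀ Q : EuclideanSpace ℝ (Fin n), ‖Q - Qs‖ > D → Z Qs - Z Q ≥ L * ‖Qs - Q‖)
    (hout : ‖Q0 - Qs‖ > D) :
    ‖Q1 - Qs‖ ≤ ‖Q0 - Qs‖ - L / 2 := by
  have hgap : L * ‖Q0 - Qs‖ ≤ Z Qs - Z Q0 := norm_sub_rev Qs Q0 ▸ hpoly Q0 hout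
  obtain ⟨hDB, hDL⟩ := max_le_iff.mp hD
  exact le_sub_half_of_sq_le hL (norm_nonneg _) (hDL.trans hout.le) (hDB.trans hout.le)
    (by linarith)

/-- Lemma 1 (per-iteration contraction): under the drift inequality and the local
polyhedron property, if `‖Q t − Q*‖ > D` then `‖Q (t+1) − Q*‖ ≤ ‖Q t − Q*‖ − L/2`. -/
theorem stmt3 {n : ℕ} (Q0 Q1 Qs : EuclideanSpace ℝ (Fin n))
    (Z : EuclideanSpace ℝ (Fin n) → ℝ) (B L D : ℝ)
    (hB : 0 < B) (hL : 0 < L)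
    (hD : D ≥ max (B / L - L / 4) (L / 2))
    (hdrift : ‖Q1 - Qs‖ ^ 2 ≤ ‖Q0 - Qs‖ ^ 2 + B - 2 * (Z Qs - Z Q0))
    (hpoly : ∀ Q : EuclideanSpace ℝ (Fin n), ‖Q - Qs‖ > D → Z Qs - Z Q ≥ L * ‖Qs - Q‖)
    (hout : ‖Q0 - Qs‖ > D) :
    ‖Q1 - Qs‖ ≤ ‖Q0 - Qs‖ - L / 2 :=
  stmt3_general Q0 Q1 Qs Z B L D hL hD hdrift hpoly hout
end

section
/- Let (Q(t)) be a sequence of vectors such that for all t: if ||Q(t) − Q*|| > D then ||Q(t+1) − Q*|| ≤ ||Q(t) − Q*|| − L/2, and in all cases ||Q(t+1) − Q(t)|| ≤ √B. If for some τ we have ||Q(τ) − Q*|| ≤ D + √B, then ||Q(t) − Q*|| ≤ D + √B for all t ≥ τ. -/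
/-! Above level `D` the distance to `Q*` does not increase, and at or below `D` one step
raises it by at most `√B`; either way the bound `D + √B` survives each step. -/

theorem le_add_of_le_add_of_step_le (r : ℕ → ℝ) (D s : ℝ)
    (hdec : ∀ t, D < r t → r (t + 1) ≤ r t) (hstep : ∀ t, r (t + 1) ≤ r t + s)
    {τ : ℕ} (hτ : r τ ≤ D + s) : ∀ t, τ ≤ t → r t ≤ D + s := by
  intro t ht
  induction t, ht using Nat.le_induction with
  | base => exact hτ
  | succ t _ ih =>
    rcases lt_or_ge D (r t) with hlt | hle
    · exact (hdec t hlt).trans ih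
    · linarith [hstep t]

theorem stmt6_general {n : ℕ} (Q : ℕ → EuclideanSpace ℝ (Fin n)) (Qs : EuclideanSpace ℝ (Fin n))
    (D L B : ℝ) (hL : 0 ≤ L)
    (hcontract : ∀ t : ℕ, ‖Q t - Qs‖ > D → ‖Q (t + 1) - Qs‖ ≤ ‖Q t - Qs‖ - L / 2)
    (hstep : ∀ t : ℕ, ‖Q (t + 1) - Q t‖ ≤ Real.sqrt B)
    (τ : ℕ) (hτ : ‖Q τ - Qs‖ ≤ D + Real.sqrt B) :
    ∀ t : ℕ, τ ≤ t → ‖Q t - Qs‖ ≤ D + Real.sqrt B := by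
  refine le_add_of_le_add_of_step_le (fun t ↦ ‖Q t - Qs‖) D (Real.sqrt B) ?_ ?_ hτ
  · intro t hD
    linarith [hcontract t hD]
  · intro t
    linarith [norm_sub_le_norm_sub_add_norm_sub (Q (t + 1)) (Q t) Qs, hstep t]

/-- Lemma 2: once the queue vector enters the ball of radius `D + √B` around `Q*`,
it never leaves it. -/
theorem stmt6 {n : ℕ} (Q : ℕ → EuclideanSpace ℝ (Fin n)) (Qs : EuclideanSpace ℝ (Fin n))
    (D L B : ℝ) (hD : 0 < D) (hB : 0 < B) (hL : 0 ≤ L)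
    (hcontract : ∀ t : ℕ, ‖Q t - Qs‖ > D → ‖Q (t + 1) - Qs‖ ≤ ‖Q t - Qs‖ - L / 2)
    (hstep : ∀ t : ℕ, ‖Q (t + 1) - Q t‖ ≤ Real.sqrt B)
    (τ : ℕ) (hτ : ‖Q τ - Qs‖ ≤ D + Real.sqrt B) :
    ∀ t : ℕ, τ ≤ t → ‖Q t - Qs‖ ≤ D + Real.sqrt B :=
  stmt6_general Q Qs D L B hL hcontract hstep τ hτ
end

section
/- Let (Q(t)) be a sequence of nonnegative vectors with Q(0) = 0 satisfying: ||Q(t+1)||² − ||Q(t)||² ≤ B + 2V h_max − 2κ||Q(t)|| whenever ||Q(t)|| ≥ (B/2 + V h_max)/κ, and ||Q(t+1)|| ≤ ||Q(t)|| + √B always. Then for all t: ||Q(t)|| ≤ (B/2 + V h_max)/κ + √B. -/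
/-! Above the threshold `(B/2 + V h_max)/κ` the drift bound makes `‖Q (t+1)‖² ≤ ‖Q t‖²`, so the
norm cannot grow there; below it one step adds at most `√B`. Hence the norm never exceeds the
threshold plus `√B`. -/

theorem le_add_of_increment_le_of_nonincreasing_above {α : Type*} [AddCommMonoid α] [LinearOrder α]
    [IsOrderedAddMonoid α] {x : ℕ → α} {c d : α} (h0 : x 0 ≤ c + d)
    (hstep : ∀ t, x (t + 1) ≤ x t + d) (habove : ∀ t, c < x t → x (t + 1) ≤ x t) :
    ∀ t, x t ≤ c + d := by
  intro t
  induction t with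
  | zero => exact h0
  | succ t ih =>
    rcases le_or_gt (x t) c with hbelow | hgt
    · exact (hstep t).trans (add_le_add_left hbelow d)
    · exact (habove t hgt).trans ih

theorem stmt7_general {n : ℕ} (Q : ℕ → EuclideanSpace ℝ (Fin n))
    (B V hmax κ : ℝ) (hB : 0 < B) (hV : 0 < V) (hh : 0 < hmax) (hκ : 0 < κ)
    (h0 : Q 0 = 0)
    (hdrift : ∀ t : ℕ, (B / 2 + V * hmax) / κ ≤ ‖Q t‖ →
      ‖Q (t + 1)‖ ^ 2 - ‖Q t‖ ^ 2 ≤ B + 2 * V * hmax - 2 * κ * ‖Q t‖)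
    (hstep : ∀ t : ℕ, ‖Q (t + 1)‖ ≤ ‖Q t‖ + Real.sqrt B) :
    ∀ t : ℕ, ‖Q t‖ ≤ (B / 2 + V * hmax) / κ + Real.sqrt B := by
  have hstart : ‖Q 0‖ ≤ (B / 2 + V * hmax) / κ + Real.sqrt B := by
    rw [h0, norm_zero]
    positivity
  refine le_add_of_increment_le_of_nonincreasing_above hstart hstep fun t habove => ?_
  have hsq : ‖Q (t + 1)‖ ^ 2 ≤ ‖Q t‖ ^ 2 := by
    have hthreshold := (div_le_iff₀ hκ).mp habove.le
    linarith [hdrift t habove.le]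
  exact le_of_pow_le_pow_left₀ two_ne_zero (norm_nonneg _) hsq

/-- Lemma 3 (uniform queue-length bound): a nonnegative queue process started at `0`
whose squared norm drifts downward above the threshold `(B/2 + V h_max)/κ` and whose
norm increases by at most `√B` per step stays below `(B/2 + V h_max)/κ + √B`. -/
theorem stmt7 {n : ℕ} (Q : ℕ → EuclideanSpace ℝ (Fin n))
    (B V hmax κ : ℝ) (hB : 0 < B) (hV : 0 < V) (hh : 0 < hmax) (hκ : 0 < κ)
    (hnonneg : ∀ t i, 0 ≤ Q t i) (h0 : Q 0 = 0)
    (hdrift : ∀ t : ℕ, (B / 2 + V * hmax) / κ ≤ ‖Q t‖ →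
      ‖Q (t + 1)‖ ^ 2 - ‖Q t‖ ^ 2 ≤ B + 2 * V * hmax - 2 * κ * ‖Q t‖)
    (hstep : ∀ t : ℕ, ‖Q (t + 1)‖ ≤ ‖Q t‖ + Real.sqrt B) :
    ∀ t : ℕ, ‖Q t‖ ≤ (B / 2 + V * hmax) / κ + Real.sqrt B :=
  stmt7_general Q B V hmax κ hB hV hh hκ h0 hdrift hstep
end
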